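/- arXiv:2006.01231 — 2 statements merged into one kernel-verified Lean document; each statement's English description precedes it below -/
import Mathlib

section
/- If descent occurs at the coarse MG/OPT level, the prolongated correction is a descent direction at the fine level: suppose $\mathcal{J}_{k-1}(v'_{k-1}) < \mathcal{J}_{k-1}(v_{k-1})$ and the Hessian of $\mathcal{J}_{k-1}$ is positive semidefinite at every point on the segment connecting $v_{k-1}$ and $v'_{k-1}$. Then $d_k = I_{k-1}^k(v'_{k-1} - v_{k-1})$ satisfies $\langle\nabla\mathcal{J}_k(v_{k,1}), d_k\rangle_k < 0$. -/
open Set InnerProductSpace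

/-!
Restrict the coarse objective to the segment, `φ t = J (v + t • (v' - v))`. A positive
semidefinite Hessian on the segment makes `φ'' ≥ 0`, so `φ` is convex on `[0, 1]` and lies
above its tangent at `0`: `⟪∇J v, v' - v⟫ = φ' 0 ≤ φ 1 - φ 0 = J v' - J v < 0`. Adjointness of
prolongation and restriction together with gradient matching turn the left side into
`⟪∇J_k v_{k,1}, d_k⟫`.
-/

lemma le_sub_of_hasDerivAt2_nonneg {φ φ' φ'' : ℝ → ℝ} (hφ : ∀ t, HasDerivAt φ (φ' t) t)
    (hφ' : ∀ t, HasDerivAt φ' (φ'' t) t) (hφ'' : ∀ t ∈ Ioo (0 : ℝ) 1, 0 ≤ φ'' t) :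
    φ' 0 ≤ φ 1 - φ 0 := by
  have hconvex : ConvexOn ℝ (Icc 0 1) φ := by
    refine convexOn_of_hasDerivWithinAt2_nonneg (convex_Icc 0 1)
      (HasDerivAt.continuousOn fun t _ ↦ hφ t) (fun t _ ↦ (hφ t).hasDerivWithinAt)
      (fun t _ ↦ (hφ' t).hasDerivWithinAt) ?_
    simpa only [interior_Icc] using hφ''
  have := hconvex.deriv_le_slope (left_mem_Icc.2 zero_le_one) (right_mem_Icc.2 zero_le_one)
    zero_lt_one (hφ 0).differentiableAt
  rwa [(hφ 0).deriv, slope_def_field, sub_zero, div_one] at this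

lemma hasDerivAt_line {E : Type*} [NormedAddCommGroup E] [NormedSpace ℝ E] (x v : E) (t : ℝ) :
    HasDerivAt (fun s : ℝ ↦ x + s • v) v t := by
  simpa only [one_smul] using ((hasDerivAt_id' t).smul_const v).const_add x

section Gradient

variable {E : Type*} [NormedAddCommGroup E] [InnerProductSpace ℝ E] [CompleteSpace E]
  {f : E → ℝ}

lemma ContDiff.differentiable_gradient (hf : ContDiff ℝ 2 f) : Differentiable ℝ (gradient f) :=
  (toDual ℝ E).symm.toContinuousLinearEquiv.differentiable.comp
    ((hf.fderiv_right (m := 1) (by norm_num)).differentiable one_ne_zero)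

lemma DifferentiableAt.hasDerivAt_comp_line {x v : E} {t : ℝ}
    (hf : DifferentiableAt ℝ f (x + t • v)) :
    HasDerivAt (fun s : ℝ ↦ f (x + s • v)) ⟪gradient f (x + t • v), v⟫_ℝ t := by
  rw [inner_gradient_left]
  exact hf.hasFDerivAt.comp_hasDerivAt t (hasDerivAt_line x v t)

lemma hasDerivAt_inner_gradient_line {x v : E} {t : ℝ}
    (hg : DifferentiableAt ℝ (gradient f) (x + t • v)) :
    HasDerivAt (fun s : ℝ ↦ ⟪gradient f (x + s • v), v⟫_ℝ)
      ⟪fderiv ℝ (gradient f) (x + t • v) v, v⟫_ℝ t := by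
  simpa only [inner_zero_right, zero_add, Function.comp_def] using
    (hg.hasFDerivAt.comp_hasDerivAt t (hasDerivAt_line x v t)).inner ℝ (hasDerivAt_const t v)

theorem inner_gradient_sub_le_of_hessian_nonneg {x y : E} (hf : Differentiable ℝ f)
    (hg : Differentiable ℝ (gradient f))
    (hH : ∀ t ∈ Ioo (0 : ℝ) 1,
      0 ≤ ⟪fderiv ℝ (gradient f) (x + t • (y - x)) (y - x), y - x⟫_ℝ) :
    ⟪gradient f x, y - x⟫_ℝ ≤ f y - f x := by
  have := le_sub_of_hasDerivAt2_nonneg (fun t ↦ (hf _).hasDerivAt_comp_line)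
    (fun t ↦ hasDerivAt_inner_gradient_line (hg _)) hH
  simpa only [zero_smul, add_zero, one_smul, add_sub_cancel] using this

end Gradient

theorem mgopt_coarse_descent_general
    {Uk Ukm : Type*}
    [NormedAddCommGroup Uk] [InnerProductSpace ℝ Uk] [FiniteDimensional ℝ Uk]
    [NormedAddCommGroup Ukm] [InnerProductSpace ℝ Ukm] [FiniteDimensional ℝ Ukm]
    (P : Ukm →L[ℝ] Uk)  -- prolongation `I_{k-1}^k`
    (R : Uk →L[ℝ] Ukm)  -- restriction `I_k^{k-1}`
    (hadj : ∀ (z : Ukm) (u : Uk), (inner ℝ (P z) u : ℝ) = inner ℝ z (R u))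
    (Jk : Uk → ℝ) (Jkm : Ukm → ℝ)
    (hJkm : ContDiff ℝ 2 Jkm)
    (vk1 : Uk) (vkm vkm' : Ukm)
    -- coarse-gradient matching from the MG/OPT construction of `τ_{k-1}`
    (hmatch : R (gradient Jk vk1) = gradient Jkm vkm)
    -- descent at the coarse level
    (hdesc : Jkm vkm' < Jkm vkm)
    -- positive semidefinite Hessian on the segment connecting `vkm` and `vkm'`
    (hHess : ∀ t ∈ Icc (0 : ℝ) 1, ∀ w : Ukm,
      0 ≤ (inner ℝ (fderiv ℝ (fun x => gradient Jkm x) (vkm + t • (vkm' - vkm)) w) w : ℝ))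
    (dk : Uk) (hdk : dk = P (vkm' - vkm)) :
    (inner ℝ (gradient Jk vk1) dk : ℝ) < 0 := by
  have htangent : ⟪gradient Jkm vkm, vkm' - vkm⟫_ℝ ≤ Jkm vkm' - Jkm vkm :=
    inner_gradient_sub_le_of_hessian_nonneg (hJkm.differentiable (by norm_num))
      hJkm.differentiable_gradient fun t ht ↦ hHess t (Ioo_subset_Icc_self ht) _
  have hfine : ⟪gradient Jk vk1, dk⟫_ℝ = ⟪gradient Jkm vkm, vkm' - vkm⟫_ℝ := by
    rw [hdk, real_inner_comm, hadj, hmatch, real_inner_comm]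
  linarith

/-- If descent occurs at the coarse MG/OPT level and the coarse
Hessian is positive semidefinite along the segment connecting the coarse
iterates, then the prolongated coarse correction is a descent direction at the
fine level. -/
theorem mgopt_coarse_descent
    {Uk Ukm : Type*}
    [NormedAddCommGroup Uk] [InnerProductSpace ℝ Uk] [FiniteDimensional ℝ Uk]
    [NormedAddCommGroup Ukm] [InnerProductSpace ℝ Ukm] [FiniteDimensional ℝ Ukm]
    (P : Ukm →L[ℝ] Uk)  -- prolongation `I_{k-1}^k`
    (R : Uk →L[ℝ] Ukm)  -- restriction `I_k^{k-1}`
    (hadj : ∀ (z : Ukm) (u : Uk), (inner ℝ (P z) u : ℝ) = inner ℝ z (R u))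
    (Jk : Uk → ℝ) (Jkm : Ukm → ℝ)
    (hJk : Differentiable ℝ Jk) (hJkm : ContDiff ℝ 2 Jkm)
    (vk1 : Uk) (vkm vkm' : Ukm)
    -- coarse-gradient matching from the MG/OPT construction of `τ_{k-1}`
    (hmatch : R (gradient Jk vk1) = gradient Jkm vkm)
    -- descent at the coarse level
    (hdesc : Jkm vkm' < Jkm vkm)
    -- positive semidefinite Hessian on the segment connecting `vkm` and `vkm'`
    (hHess : ∀ t ∈ Icc (0 : ℝ) 1, ∀ w : Ukm,
      0 ≤ (inner ℝ (fderiv ℝ (fun x => gradient Jkm x) (vkm + t • (vkm' - vkm)) w) w : ℝ))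
    (dk : Uk) (hdk : dk = P (vkm' - vkm)) :
    (inner ℝ (gradient Jk vk1) dk : ℝ) < 0 :=
  mgopt_coarse_descent_general P R hadj Jk Jkm hJkm vk1 vkm vkm' hmatch hdesc hHess dk hdk
end

section
/- If the smoother fixes the optimum and the coarse-gradient matching holds, the MG/OPT V-cycle fixes the optimum: if $v_K = u_K$ is a point where $\nabla\mathcal{J}_K(u_K) = 0$ and each smoother $S_k$ maps any point with vanishing gradient of $\mathcal{J}_k$ to itself, then at every level $k$ reached by the recursion the gradient $\nabla\mathcal{J}_k(v_k)$ vanishes and all coarse corrections $d_k$ are zero, so the V-cycle returns $u_K$ unchanged. -/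
/-!
Stationarity of the corrected functional `Ĵ_k - ⟪τ, ·⟫` at `u` means exactly `∇Ĵ_k(u) = τ`.
So at a stationary `u_{k+1}` the smoother does nothing, and the correction term
`R τ + ∇Ĵ_k(R u) - R ∇Ĵ_{k+1}(u)` collapses to `∇Ĵ_k(R u)`: the restriction `R u` is stationary
for the coarse corrected functional. By induction on the level the coarse solve returns `R u`,
the correction `d` vanishes, and postsmoothing again leaves `u` in place.
-/

/-- The MG/OPT V-cycle recursion (Algorithm 1): presmoothing, restriction,
correction term, recursive coarse solve, prolongated correction with step
size, postsmoothing.  `S k τ` is one step of the smoother for the corrected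
problem `𝒥_k(u) = Ĵ_k(u) - ⟪τ, u⟫_k`. -/
noncomputable def mgoptVcycle
    (U : ℕ → Type) [∀ k, NormedAddCommGroup (U k)]
    [∀ k, InnerProductSpace ℝ (U k)] [∀ k, CompleteSpace (U k)]
    (S : ∀ k, U k → U k → U k)
    (R : ∀ k : ℕ, U (k + 1) →L[ℝ] U k)
    (P : ∀ k : ℕ, U k →L[ℝ] U (k + 1))
    (Jhat : ∀ k, U k → ℝ)
    (ν μ : ℕ → ℕ) (s : ℕ → ℝ) :
    ∀ k, U k → U k → U k
  | 0, τ, v => (S 0 τ)^[ν 0 + μ 0] v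
  | (k + 1), τ, v =>
    let v1 := (S (k + 1) τ)^[ν (k + 1)] v
    let vm := R k v1
    let τ' := R k τ + gradient (Jhat k) vm - R k (gradient (Jhat (k + 1)) v1)
    let v' := mgoptVcycle U S R P Jhat ν μ s k τ' vm
    let d := P k (v' - vm)
    (S (k + 1) τ)^[μ (k + 1)] (v1 + s (k + 1) • d)

section CorrectedGradient

variable {E : Type*} [NormedAddCommGroup E] [InnerProductSpace ℝ E] [CompleteSpace E]
  {J : E → ℝ} {τ v : E}

theorem gradient_sub_inner (hJ : DifferentiableAt ℝ J v) :
    gradient (fun u => J u - (inner ℝ τ u : ℝ)) v = gradient J v - τ := by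
  refine HasGradientAt.gradient ?_
  rw [hasGradientAt_iff_hasFDerivAt, map_sub]
  exact hJ.hasGradientAt.hasFDerivAt.sub (innerSL ℝ τ).hasFDerivAt

theorem gradient_sub_inner_eq_zero_iff (hJ : DifferentiableAt ℝ J v) :
    gradient (fun u => J u - (inner ℝ τ u : ℝ)) v = 0 ↔ gradient J v = τ := by
  rw [gradient_sub_inner hJ, sub_eq_zero]

end CorrectedGradient

/-- If every smoother fixes points with vanishing corrected
gradient, then the MG/OPT V-cycle fixes the optimum: at every level reached by
the recursion the corrected gradient vanishes, all coarse corrections are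
zero, and the V-cycle returns its input unchanged. -/
theorem mgopt_vcycle_fixes_optimum
    (U : ℕ → Type) [∀ k, NormedAddCommGroup (U k)]
    [∀ k, InnerProductSpace ℝ (U k)] [∀ k, CompleteSpace (U k)]
    (S : ∀ k, U k → U k → U k)
    (R : ∀ k : ℕ, U (k + 1) →L[ℝ] U k)
    (P : ∀ k : ℕ, U k →L[ℝ] U (k + 1))
    (Jhat : ∀ k, U k → ℝ)
    (hdiff : ∀ k, Differentiable ℝ (Jhat k))
    (ν μ : ℕ → ℕ) (s : ℕ → ℝ)
    -- each smoother maps any point with vanishing corrected gradient to itself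
    (hfix : ∀ k (τ : U k) (v : U k),
      gradient (fun u => Jhat k u - (inner ℝ τ u : ℝ)) v = 0 → S k τ v = v)
    (K : ℕ) (τK : U K) (uK : U K)
    (hopt : gradient (fun u => Jhat K u - (inner ℝ τK u : ℝ)) uK = 0) :
    mgoptVcycle U S R P Jhat ν μ s K τK uK = uK := by
  induction K with
  | zero => exact Function.iterate_fixed (hfix 0 τK uK hopt) _
  | succ k ih =>
    have hsmooth := Function.iterate_fixed (hfix (k + 1) τK uK hopt)
    have hgrad : gradient (Jhat (k + 1)) uK = τK :=
      (gradient_sub_inner_eq_zero_iff (hdiff (k + 1) uK)).1 hopt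
    have hcoarse :
        mgoptVcycle U S R P Jhat ν μ s k
          (R k τK + gradient (Jhat k) (R k uK) - R k τK) (R k uK) = R k uK := by
      refine ih _ _ ((gradient_sub_inner_eq_zero_iff (hdiff k _)).2 ?_)
      abel
    simp only [mgoptVcycle, hsmooth, hgrad, hcoarse, sub_self, map_zero, smul_zero, add_zero]
end
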